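/- arXiv:1210.3349 — 6 statements merged into one kernel-verified Lean document; each statement's English description precedes it below -/
import Mathlib

section
/- C_n is odd if and only if n = 2^a - 1 for some integer a ≥ 0. -/
/-!
Pair each term of `C_{n+1} = ∑_{i+j=n} C_i C_j` with its mirror image `C_j C_i`: modulo 2 the
pairs cancel, leaving only the middle term `C_m²` when `n = 2m`. Hence `C_{2m+1} ≡ C_m` and
`C_{2m+2} ≡ 0 (mod 2)`, and `C_n` is odd exactly when the binary expansion of `n` is all ones.
-/

open Finset

namespace Finset

variable {ι R : Type*} [Semiring R] [CharP R 2]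

theorem sum_eq_sum_filter_fixed_of_charTwo [DecidableEq ι] (s : Finset ι) (σ : ι → ι)
    (f : ι → R) (hσ : ∀ i ∈ s, σ i ∈ s) (hσσ : ∀ i ∈ s, σ (σ i) = i)
    (hf : ∀ i ∈ s, f (σ i) = f i) :
    ∑ i ∈ s, f i = ∑ i ∈ s with σ i = i, f i := by
  have hcancel : ∑ i ∈ s with ¬σ i = i, f i = 0 := by
    refine sum_involution (fun i _ => σ i) ?_ ?_ ?_ ?_
    · intro i hi
      rw [hf i (mem_filter.mp hi).1, CharTwo.add_self_eq_zero]
    · intro i hi _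
      exact (mem_filter.mp hi).2
    · intro i hi
      obtain ⟨his, hfix⟩ := mem_filter.mp hi
      exact mem_filter.mpr ⟨hσ i his, by rwa [hσσ i his, eq_comm]⟩
    · intro i hi
      exact hσσ i (mem_filter.mp hi).1
  rw [← sum_filter_add_sum_filter_not s (fun i => σ i = i), hcancel, add_zero]

end Finset

section CharTwo

variable {R : Type*} [CommSemiring R] [CharP R 2]

theorem sum_antidiagonal_mul_eq_sum_diagonal_of_charTwo (f : ℕ → R) (n : ℕ) :
    ∑ p ∈ antidiagonal n, f p.1 * f p.2 =
      ∑ p ∈ antidiagonal n with p.swap = p, f p.1 * f p.2 :=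
  sum_eq_sum_filter_fixed_of_charTwo _ Prod.swap _
    (fun _ => HasAntidiagonal.swap_mem_antidiagonal.mpr) (fun _ _ => Prod.swap_swap _)
    (fun _ _ => mul_comm _ _)

theorem sum_antidiagonal_two_mul_mul_of_charTwo (f : ℕ → R) (m : ℕ) :
    ∑ p ∈ antidiagonal (2 * m), f p.1 * f p.2 = f m * f m := by
  have hdiag : {p ∈ antidiagonal (2 * m) | p.swap = p} = {(m, m)} := by
    ext ⟨i, j⟩
    simp only [mem_filter, HasAntidiagonal.mem_antidiagonal, Prod.swap_prod_mk, Prod.mk.injEq,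
      mem_singleton]
    omega
  rw [sum_antidiagonal_mul_eq_sum_diagonal_of_charTwo, hdiag, sum_singleton]

theorem sum_antidiagonal_two_mul_add_one_mul_of_charTwo (f : ℕ → R) (m : ℕ) :
    ∑ p ∈ antidiagonal (2 * m + 1), f p.1 * f p.2 = 0 := by
  have hdiag : {p ∈ antidiagonal (2 * m + 1) | p.swap = p} = ∅ := by
    ext ⟨i, j⟩
    simp only [mem_filter, HasAntidiagonal.mem_antidiagonal, Prod.swap_prod_mk, Prod.mk.injEq,
      notMem_empty, iff_false]
    omega
  rw [sum_antidiagonal_mul_eq_sum_diagonal_of_charTwo, hdiag, sum_empty]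

end CharTwo

theorem odd_catalan_two_mul_add_one_iff (m : ℕ) :
    Odd (catalan (2 * m + 1)) ↔ Odd (catalan m) := by
  rw [← ZMod.natCast_eq_one_iff_odd, ← ZMod.natCast_eq_one_iff_odd, catalan_succ']
  push_cast
  rw [sum_antidiagonal_two_mul_mul_of_charTwo (fun i => (catalan i : ZMod 2)), ← sq,
    ZMod.pow_card]

theorem even_catalan_two_mul_add_two (m : ℕ) : Even (catalan (2 * m + 2)) := by
  rw [← ZMod.natCast_eq_zero_iff_even, catalan_succ']
  push_cast
  exact sum_antidiagonal_two_mul_add_one_mul_of_charTwo (fun i => (catalan i : ZMod 2)) m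

theorem exists_two_mul_add_one_eq_two_pow_sub_one_iff (m : ℕ) :
    (∃ a, 2 * m + 1 = 2 ^ a - 1) ↔ ∃ a, m = 2 ^ a - 1 := by
  constructor
  · rintro ⟨_ | a, ha⟩
    · simp at ha
    · refine ⟨a, ?_⟩
      rw [pow_succ] at ha
      omega
  · rintro ⟨a, rfl⟩
    refine ⟨a + 1, ?_⟩
    have := a.one_le_two_pow
    rw [pow_succ]
    omega

theorem two_mul_add_two_ne_two_pow_sub_one (m a : ℕ) : 2 * m + 2 ≠ 2 ^ a - 1 := by
  rcases a with _ | a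
  · simp
  · have := a.one_le_two_pow
    rw [pow_succ]
    omega

/-- `C_n` is odd if and only if `n = 2^a - 1` for some integer `a ≥ 0`. -/
theorem catalan_odd_iff (n : ℕ) : Odd (catalan n) ↔ ∃ a : ℕ, n = 2 ^ a - 1 := by
  induction n using Nat.strong_induction_on with
  | _ n ih =>
    rcases n with _ | k
    · simpa using ⟨0, rfl⟩
    obtain ⟨m, rfl | rfl⟩ := Nat.even_or_odd' k
    · rw [odd_catalan_two_mul_add_one_iff, ih m (by omega),
        exists_two_mul_add_one_eq_two_pow_sub_one_iff]
    · exact iff_of_false (Nat.not_odd_iff_even.mpr (even_catalan_two_mul_add_two m))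
        fun ⟨a, ha⟩ => two_mul_add_two_ne_two_pow_sub_one m a ha
end

section
/- For all n ≥ 0, C_n ≡ 1 (mod 4) if n = 2^a - 1 for some a ≥ 0; C_n ≡ 2 (mod 4) if n = 2^a + 2^b - 1 for some b > a ≥ 0; and C_n ≡ 0 (mod 4) otherwise. -/
/-!
Segner's recurrence `C_{m+1} = ∑_{i ≤ m} C_i C_{m-i}` is symmetric under `i ↦ m - i`, so
`C_{2k+2} = 2 H(2k+1)` and `C_{2k+1} = 2 H(2k) + C_k²`, where `H(m)` is the sum over the first
half of the indices. Induction on these gives that `C_n` is odd exactly when `n + 1` is a power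
of two. Hence a term of `H(m)` is odd exactly when `i + 1 < m - i + 1` are both powers of two;
by uniqueness of binary expansions at most one term is odd, and one is iff `m + 2 = 2^a + 2^b`
with `a < b`. Reading the two recurrences mod 4, with `C_k² ≡ 1` or `0` according to the parity
of `C_k`, gives the three cases.
-/

open Finset

def IsSumOfTwoPowersOfTwo (m : ℕ) : Prop := ∃ a b, a < b ∧ m = 2 ^ a + 2 ^ b

theorem log_two_two_pow_add_two_pow {a b : ℕ} (h : a < b) : Nat.log 2 (2 ^ a + 2 ^ b) = b := by
  have : 2 ^ a < 2 ^ b := Nat.pow_lt_pow_right one_lt_two h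
  apply Nat.log_eq_of_pow_le_of_lt_pow
  · exact Nat.le_add_left _ _
  · rw [pow_succ]; omega

theorem IsSumOfTwoPowersOfTwo.not_isPowerOfTwo {m : ℕ} (h : IsSumOfTwoPowersOfTwo m) :
    ¬ m.isPowerOfTwo := by
  rintro ⟨e, rfl⟩
  obtain ⟨a, b, hab, hm⟩ := h
  have hb := log_two_two_pow_add_two_pow hab
  rw [← hm, Nat.log_pow one_lt_two] at hb
  subst hb
  have := Nat.one_le_two_pow (n := a)
  omega

theorem eq_of_two_pow_add_two_pow_eq {a b c d : ℕ} (hab : a < b) (hcd : c < d)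
    (h : 2 ^ a + 2 ^ b = 2 ^ c + 2 ^ d) : a = c := by
  have hbd : b = d := by
    rw [← log_two_two_pow_add_two_pow hab, h, log_two_two_pow_add_two_pow hcd]
  subst hbd
  exact Nat.pow_right_injective le_rfl (by simpa using h)

theorem isPowerOfTwo_two_mul_iff {m : ℕ} : (2 * m).isPowerOfTwo ↔ m.isPowerOfTwo := by
  constructor
  · rintro ⟨_ | e, he⟩
    · omega
    · exact ⟨e, by rw [pow_succ] at he; omega⟩
  · rintro ⟨e, rfl⟩
    exact ⟨e + 1, by ring⟩

theorem not_isPowerOfTwo_two_mul_add_three (m : ℕ) : ¬ (2 * m + 3).isPowerOfTwo := by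
  rintro ⟨_ | e, he⟩
  · omega
  · rw [pow_succ] at he; omega

theorem exists_eq_two_pow_sub_one_iff {n : ℕ} :
    (∃ a, n = 2 ^ a - 1) ↔ (n + 1).isPowerOfTwo := by
  refine exists_congr fun a => ?_
  have := Nat.one_le_two_pow (n := a)
  omega

theorem exists_eq_two_pow_add_two_pow_sub_one_iff {n : ℕ} :
    (∃ a b, a < b ∧ n = 2 ^ a + 2 ^ b - 1) ↔ IsSumOfTwoPowersOfTwo (n + 1) := by
  refine exists₂_congr fun a b => and_congr_right fun _ => ?_
  have := Nat.one_le_two_pow (n := a)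
  have := Nat.one_le_two_pow (n := b)
  omega

theorem mul_self_mod_four (c : ℕ) : c * c % 4 = if Odd c then 1 else 0 := by
  obtain ⟨k, rfl | rfl⟩ := Nat.even_or_odd' c
  · simp only [Nat.not_odd_iff_even.2 (even_two_mul k), if_false]
    ring_nf; omega
  · simp only [odd_two_mul_add_one k, if_true]
    ring_nf; omega

theorem Finset.odd_sum_iff_exists_odd {ι : Type*} {s : Finset ι} {f : ι → ℕ}
    (h : ∀ i ∈ s, ∀ j ∈ s, Odd (f i) → Odd (f j) → i = j) :
    Odd (∑ i ∈ s, f i) ↔ ∃ i ∈ s, Odd (f i) := by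
  have hcard : #{i ∈ s | Odd (f i)} ≤ 1 :=
    card_le_one.2 fun i hi j hj => h i (mem_filter.1 hi).1 j (mem_filter.1 hj).1
      (mem_filter.1 hi).2 (mem_filter.1 hj).2
  rw [odd_sum_iff_odd_card_odd, ← filter_nonempty_iff, ← card_pos, Nat.odd_iff]
  omega

theorem Finset.sum_range_add_of_reflect {M : Type*} [AddCommMonoid M] (f : ℕ → M) {j k : ℕ}
    (hf : ∀ i < k, f (j + k - 1 - i) = f i) :
    ∑ i ∈ range (j + k), f i = ∑ i ∈ range j, f i + ∑ i ∈ range k, f i := by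
  rw [sum_range_add, ← sum_range_reflect _ k]
  refine congrArg _ (sum_congr rfl fun i hi => ?_)
  rw [mem_range] at hi
  rw [← hf i hi]
  congr 1
  omega

def catalanHalfSum (m : ℕ) : ℕ := ∑ i ∈ range ((m + 1) / 2), catalan i * catalan (m - i)

theorem catalan_succ_eq_sum_range (m : ℕ) :
    catalan (m + 1) = ∑ i ∈ range (m + 1), catalan i * catalan (m - i) := by
  rw [catalan_succ, Fin.sum_univ_eq_sum_range (fun i => catalan i * catalan (m - i))]

theorem catalan_mul_catalan_sub_reflect {m i : ℕ} (hi : i ≤ m) :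
    catalan (m - i) * catalan (m - (m - i)) = catalan i * catalan (m - i) := by
  rw [Nat.sub_sub_self hi, mul_comm]

theorem catalan_two_mul_add_one (k : ℕ) :
    catalan (2 * k + 1) = 2 * catalanHalfSum (2 * k) + catalan k * catalan k := by
  rw [catalan_succ_eq_sum_range, show 2 * k + 1 = (k + 1) + k by ring,
    sum_range_add_of_reflect, sum_range_succ, catalanHalfSum,
    show (2 * k + 1) / 2 = k by omega, show 2 * k - k = k by omega]
  · ring
  · intro i hi
    rw [show k + 1 + k - 1 - i = 2 * k - i by omega, catalan_mul_catalan_sub_reflect (by omega)]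

theorem catalan_two_mul_add_two (k : ℕ) :
    catalan (2 * k + 2) = 2 * catalanHalfSum (2 * k + 1) := by
  rw [catalan_succ_eq_sum_range, show 2 * k + 1 + 1 = (k + 1) + (k + 1) by ring,
    sum_range_add_of_reflect, catalanHalfSum, show (2 * k + 1 + 1) / 2 = k + 1 by omega]
  · ring
  · intro i hi
    rw [show k + 1 + (k + 1) - 1 - i = 2 * k + 1 - i by omega,
      catalan_mul_catalan_sub_reflect (by omega)]

theorem odd_catalan_iff (n : ℕ) : Odd (catalan n) ↔ (n + 1).isPowerOfTwo := by
  induction n using Nat.strong_induction_on with | _ n ih =>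
  obtain ⟨k, rfl | rfl⟩ := Nat.even_or_odd' n
  · cases k with
    | zero => simp [catalan_zero, Nat.isPowerOfTwo_one]
    | succ k =>
      rw [show 2 * (k + 1) = 2 * k + 2 by ring, catalan_two_mul_add_two,
        show 2 * k + 2 + 1 = 2 * k + 3 by ring,
        iff_false_intro (not_isPowerOfTwo_two_mul_add_three k)]
      simp [Nat.odd_mul]
  · rw [catalan_two_mul_add_one, Nat.odd_add', Nat.odd_mul, and_self, ih k (by omega),
      show 2 * k + 1 + 1 = 2 * (k + 1) by ring, isPowerOfTwo_two_mul_iff]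
    simp

theorem odd_catalan_mul_catalan_sub_iff {m i : ℕ} (hi : i < (m + 1) / 2) :
    Odd (catalan i * catalan (m - i)) ↔ ∃ c d, c < d ∧ i + 1 = 2 ^ c ∧ m + 2 = 2 ^ c + 2 ^ d := by
  rw [Nat.odd_mul, odd_catalan_iff, odd_catalan_iff]
  constructor
  · rintro ⟨⟨c, hc⟩, ⟨d, hd⟩⟩
    exact ⟨c, d, (Nat.pow_lt_pow_iff_right one_lt_two).1 (by omega), hc, by omega⟩
  · rintro ⟨c, d, -, hc, hm⟩
    exact ⟨⟨c, hc⟩, ⟨d, by omega⟩⟩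

theorem odd_catalanHalfSum_iff (m : ℕ) :
    Odd (catalanHalfSum m) ↔ IsSumOfTwoPowersOfTwo (m + 2) := by
  rw [catalanHalfSum, odd_sum_iff_exists_odd]
  · constructor
    · rintro ⟨i, hi, hodd⟩
      obtain ⟨c, d, hcd, -, hm⟩ := (odd_catalan_mul_catalan_sub_iff (mem_range.1 hi)).1 hodd
      exact ⟨c, d, hcd, hm⟩
    · rintro ⟨a, b, hab, hm⟩
      have : 2 ^ a < 2 ^ b := Nat.pow_lt_pow_right one_lt_two hab
      have := Nat.one_le_two_pow (n := a)
      have hi : 2 ^ a - 1 < (m + 1) / 2 := by omega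
      exact ⟨_, mem_range.2 hi, (odd_catalan_mul_catalan_sub_iff hi).2 ⟨a, b, hab, by omega, hm⟩⟩
  · intro i hi j hj hi' hj'
    obtain ⟨c, d, hcd, hc, hm⟩ := (odd_catalan_mul_catalan_sub_iff (mem_range.1 hi)).1 hi'
    obtain ⟨c', d', hcd', hc', hm'⟩ := (odd_catalan_mul_catalan_sub_iff (mem_range.1 hj)).1 hj'
    obtain rfl := eq_of_two_pow_add_two_pow_eq hcd hcd' (hm.symm.trans hm')
    omega

open Classical in
theorem catalan_mod_four_eq (n : ℕ) :
    catalan n % 4 =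
      if (n + 1).isPowerOfTwo then 1 else if IsSumOfTwoPowersOfTwo (n + 1) then 2 else 0 := by
  obtain ⟨k, rfl | rfl⟩ := Nat.even_or_odd' n
  · cases k with
    | zero => simp [catalan_zero, Nat.isPowerOfTwo_one]
    | succ k =>
      rw [show 2 * (k + 1) = 2 * k + 2 by ring, catalan_two_mul_add_two,
        if_neg (not_isPowerOfTwo_two_mul_add_three k), ← odd_catalanHalfSum_iff]
      split_ifs with h <;> rw [Nat.odd_iff] at * <;> omega
  · have hpow : (2 * k + 1 + 1).isPowerOfTwo ↔ Odd (catalan k) := by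
      rw [odd_catalan_iff, show 2 * k + 1 + 1 = 2 * (k + 1) by ring, isPowerOfTwo_two_mul_iff]
    have hsum : IsSumOfTwoPowersOfTwo (2 * k + 1 + 1) ↔ Odd (catalanHalfSum (2 * k)) :=
      (odd_catalanHalfSum_iff _).symm
    have hdisj : Odd (catalan k) → ¬ Odd (catalanHalfSum (2 * k)) := fun h hH =>
      (hsum.2 hH).not_isPowerOfTwo (hpow.2 h)
    have hsq := mul_self_mod_four (catalan k)
    rw [catalan_two_mul_add_one]
    simp only [hpow, hsum]
    split_ifs at hsq ⊢ <;> simp only [Nat.odd_iff] at * <;> omega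

/-- `C_n mod 4` is `1` if `n = 2^a - 1`, is `2` if `n = 2^a + 2^b - 1` with `b > a`,
and is `0` otherwise. -/
theorem catalan_mod_four (n : ℕ) :
    ((∃ a : ℕ, n = 2 ^ a - 1) → catalan n % 4 = 1) ∧
    ((∃ a b : ℕ, a < b ∧ n = 2 ^ a + 2 ^ b - 1) → catalan n % 4 = 2) ∧
    ((¬ ∃ a : ℕ, n = 2 ^ a - 1) → (¬ ∃ a b : ℕ, a < b ∧ n = 2 ^ a + 2 ^ b - 1) →
      catalan n % 4 = 0) := by
  rw [exists_eq_two_pow_sub_one_iff, exists_eq_two_pow_add_two_pow_sub_one_iff,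
    catalan_mod_four_eq]
  refine ⟨fun h => if_pos h, fun h => ?_, fun h₁ h₂ => ?_⟩
  · rw [if_neg h.not_isPowerOfTwo, if_pos h]
  · rw [if_neg h₁, if_neg h₂]
end

section
/- If p ≥ 5 is prime and n ≡ -2 (mod p), then C_n ≡ 0 (mod p). -/
/-! Since `(n + 1) C_n = binom(2n, n)` and `p ∤ n + 1`, it suffices that `p ∣ binom(2n, n)`.
The last base-`p` digits of `n` and `2n` are `p - 2` and `p - 4`, so the last digit of `n`
exceeds that of `2n`, and Lucas' theorem makes `binom(2n, n)` vanish mod `p`. -/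

theorem Nat.mod_eq_sub_of_dvd_add {p n a : ℕ} (ha : 0 < a) (hap : a ≤ p) (h : p ∣ n + a) :
    n % p = p - a := by
  have hp : 0 < p := ha.trans_le hap
  have hdvd : p ∣ n % p + a := by
    rw [Nat.dvd_iff_mod_eq_zero, Nat.add_mod, Nat.mod_mod, ← Nat.add_mod,
      ← Nat.dvd_iff_mod_eq_zero]
    exact h
  obtain ⟨c, hc⟩ := hdvd
  have hlt := Nat.mod_lt n hp
  have hc1 : c = 1 := by
    rcases c with _ | _ | c
    · omega
    · rfl
    · nlinarith
  subst hc1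
  omega

theorem Nat.Prime.dvd_choose_of_mod_lt_mod {p n k : ℕ} (hp : p.Prime) (h : n % p < k % p) :
    p ∣ n.choose k := by
  have := Fact.mk hp
  have hlucas := Choose.choose_modEq_choose_mod_mul_choose_div_nat (p := p) (n := n) (k := k)
  rw [Nat.choose_eq_zero_of_lt h, zero_mul] at hlucas
  exact Nat.modEq_zero_iff_dvd.mp hlucas

theorem Nat.Prime.dvd_catalan_of_dvd_centralBinom {p n : ℕ} (hp : p.Prime) (hn : ¬p ∣ n + 1)
    (h : p ∣ n.centralBinom) : p ∣ catalan n := by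
  rw [← succ_mul_catalan_eq_centralBinom] at h
  exact (hp.dvd_mul.mp h).resolve_left hn

/-- If `p ≥ 5` is prime and `n ≡ -2 (mod p)`, then `C_n ≡ 0 (mod p)`. -/
theorem catalan_mod_p (p n : ℕ) (hp : p.Prime) (hp5 : 5 ≤ p) (h : p ∣ n + 2) :
    p ∣ catalan n := by
  have hn : n % p = p - 2 := Nat.mod_eq_sub_of_dvd_add two_pos (by omega) h
  have h2n : 2 * n % p = p - 4 :=
    Nat.mod_eq_sub_of_dvd_add four_pos (by omega) (by simpa [mul_add] using h.mul_left 2)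
  have hsucc : ¬p ∣ n + 1 := fun h1 =>
    hp.one_lt.ne' (Nat.dvd_one.mp ((Nat.dvd_add_right h1).mp h))
  refine hp.dvd_catalan_of_dvd_centralBinom hsucc (hp.dvd_choose_of_mod_lt_mod ?_)
  omega
end

section
/- For n ≥ 3, C_{n-2} = (n/2) * C_{n/2-1}^2 + ∑ m_{ijk} * C_{i-1} * C_{j-1} * C_{k-1}, where the sum is over triples (i,j,k) of positive integers with i + j + k = n, i ≤ j ≤ k < n/2; here m_{ijk} = n/3 if i = j = k, m_{ijk} = n if exactly two of i, j, k are equal, and m_{ijk} = 2n if i < j < k. The term (n/2) * C_{n/2-1}^2 is interpreted as 0 when n is odd. -/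
/-!
Let `w(i, j, k) = C_{i-1} C_{j-1} C_{k-1}` on ordered triples of positive integers with
`i + j + k = n`. Splitting off the first part and using Catalan's convolution twice gives
`∑ w = C_{n-1} - C_{n-2}`. At most one part can be `≥ n/2`, and the triples whose first part is
`≥ n/2` have total weight `(C_{n-1} + E)/2 - C_{n-2}`, where `E = C_{n/2-1}^2` for even `n` (and
`0` otherwise) is the middle term of the convolution `∑ C_{i-1} C_{n-i-1}`, which is symmetric
under `i ↦ n - i`. Hence the triples with all parts `< n/2` weigh
`(4 C_{n-2} - C_{n-1} - 3E)/2`, which the recurrence `n C_{n-1} = (4n - 6) C_{n-2}` turns into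
`(3/n) (C_{n-2} - nE/2)`. Finally `w` is symmetric, and grouping ordered triples by their sorted
rearrangement weights a sorted triple by its number of rearrangements `1, 3, 6`, which is
`3 m_{ijk} / n`.
-/

open Finset

namespace CatalanCentral

variable {M : Type*} [AddCommMonoid M]

theorem mul_catalan_sub_one_add {n : ℕ} (hn : 2 ≤ n) :
    n * catalan (n - 1) + 6 * catalan (n - 2) = 4 * n * catalan (n - 2) := by
  obtain ⟨m, rfl⟩ : ∃ m, n = m + 2 := ⟨n - 2, by omega⟩
  have hrec : (m + 2) * catalan (m + 1) = 2 * (2 * m + 1) * catalan m := by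
    refine Nat.eq_of_mul_eq_mul_left (by omega : 0 < m + 1) ?_
    have h := Nat.succ_mul_centralBinom_succ m
    rw [← succ_mul_catalan_eq_centralBinom, ← succ_mul_catalan_eq_centralBinom] at h
    linear_combination h
  rw [show m + 2 - 1 = m + 1 by omega, Nat.add_sub_cancel]
  linear_combination hrec

theorem sum_Ico_catalan_mul_catalan {n : ℕ} (hn : 2 ≤ n) :
    ∑ i ∈ Ico 1 n, catalan (i - 1) * catalan (n - i - 1) = catalan (n - 1) := by
  obtain ⟨m, rfl⟩ : ∃ m, n = m + 2 := ⟨n - 2, by omega⟩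
  rw [sum_Ico_eq_sum_range, show m + 2 - 1 = m + 1 by omega, catalan_succ,
    Fin.sum_univ_eq_sum_range (fun i => catalan i * catalan (m - i))]
  refine sum_congr rfl fun i _ => ?_
  rw [show m + 2 - (1 + i) - 1 = m - i by omega, Nat.add_sub_cancel_left]

theorem two_nsmul_sum_Ico_filter_le_two_mul {n : ℕ} (f : ℕ → M)
    (hf : ∀ i ∈ Ico 1 n, f (n - i) = f i) :
    2 • ∑ i ∈ Ico 1 n with n ≤ 2 * i, f i =
      ∑ i ∈ Ico 1 n, f i + ∑ i ∈ Ico 1 n with 2 * i = n, f i := by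
  have hreflect :
      ∑ i ∈ Ico 1 n with 2 * i < n, f i = ∑ i ∈ Ico 1 n with n < 2 * i, f i := by
    refine sum_nbij' (n - ·) (n - ·) ?_ ?_ ?_ ?_ ?_ <;> simp only [mem_filter, mem_Ico]
    · omega
    · omega
    · intro i _; omega
    · intro i _; omega
    · intro i hi; exact (hf i (mem_Ico.2 hi.1)).symm
  have hlow : ∑ i ∈ Ico 1 n, f i =
      ∑ i ∈ Ico 1 n with 2 * i < n, f i + ∑ i ∈ Ico 1 n with n ≤ 2 * i, f i := by
    simp only [← not_lt, sum_filter_add_sum_filter_not]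
  have hhigh : ∑ i ∈ Ico 1 n with n ≤ 2 * i, f i =
      ∑ i ∈ Ico 1 n with n < 2 * i, f i + ∑ i ∈ Ico 1 n with 2 * i = n, f i := by
    rw [← sum_filter_add_sum_filter_not _ (n < 2 * ·), filter_filter, filter_filter]
    congr 1 <;> refine sum_congr (filter_congr fun i _ => ?_) fun _ _ => rfl <;> omega
  rw [hlow, hreflect, two_nsmul]
  nth_rewrite 1 [hhigh]
  abel

theorem sum_Ico_filter_two_mul_eq {n : ℕ} (hn : 0 < n) (f : ℕ → M) :
    ∑ i ∈ Ico 1 n with 2 * i = n, f i = if n % 2 = 0 then f (n / 2) else 0 := by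
  split_ifs with h
  · rw [show (Ico 1 n).filter (2 * · = n) = {n / 2} by
      ext; simp only [mem_filter, mem_Ico, mem_singleton]; omega, sum_singleton]
  · rw [show (Ico 1 n).filter (2 * · = n) = ∅ by
      ext; simp only [mem_filter, mem_Ico, notMem_empty, iff_false]; omega, sum_empty]

theorem two_mul_ite_half_mul_catalan_sq {n : ℕ} (hn : 0 < n) :
    2 * (if n % 2 = 0 then n / 2 * catalan (n / 2 - 1) ^ 2 else 0) =
      n * ∑ i ∈ Ico 1 n with 2 * i = n, catalan (i - 1) * catalan (n - i - 1) := by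
  rw [sum_Ico_filter_two_mul_eq hn]
  split_ifs with h
  · rw [show n - n / 2 - 1 = n / 2 - 1 by omega, ← mul_assoc,
      Nat.mul_div_cancel' (Nat.dvd_of_mod_eq_zero h), sq]
  · rfl

def sort3 (t : ℕ × ℕ × ℕ) : ℕ × ℕ × ℕ :=
  (min t.1 (min t.2.1 t.2.2), max (min t.1 t.2.1) (min (max t.1 t.2.1) t.2.2),
    max t.1 (max t.2.1 t.2.2))

def rearrangements (a b c : ℕ) : Finset (ℕ × ℕ × ℕ) :=
  {(a, b, c), (a, c, b), (b, a, c), (b, c, a), (c, a, b), (c, b, a)}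

def numRearrangements (t : ℕ × ℕ × ℕ) : ℕ :=
  if t.1 = t.2.2 then 1 else if t.1 = t.2.1 ∨ t.2.1 = t.2.2 then 3 else 6

theorem card_rearrangements {a b c : ℕ} (hab : a ≤ b) (hbc : b ≤ c) :
    (rearrangements a b c).card = numRearrangements (a, b, c) := by
  unfold rearrangements numRearrangements
  rcases hab.eq_or_lt with rfl | hab <;> rcases hbc.eq_or_lt with rfl | hbc
  · simp
  · simp [hbc.ne, hbc.ne']
  · simp [hab.ne, hab.ne']
  · have hac := hab.trans hbc
    simp [card_insert_of_notMem, hab.ne, hab.ne', hbc.ne, hbc.ne', hac.ne, hac.ne']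

theorem mem_rearrangements_sort3 (t : ℕ × ℕ × ℕ) :
    t ∈ rearrangements (sort3 t).1 (sort3 t).2.1 (sort3 t).2.2 := by
  obtain ⟨p, q, r⟩ := t
  simp only [sort3, rearrangements, mem_insert, mem_singleton, Prod.mk.injEq]
  omega

theorem sort3_mem_rearrangements (t : ℕ × ℕ × ℕ) :
    sort3 t ∈ rearrangements t.1 t.2.1 t.2.2 := by
  obtain ⟨p, q, r⟩ := t
  simp only [sort3, rearrangements, mem_insert, mem_singleton, Prod.mk.injEq]
  omega

section Symmetrization

variable (s : Finset (ℕ × ℕ × ℕ))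
  (hs : ∀ a b c, (a, b, c) ∈ s → (b, a, c) ∈ s ∧ (a, c, b) ∈ s)
  (f : ℕ × ℕ × ℕ → M)
  (hf : ∀ a b c, f (b, a, c) = f (a, b, c) ∧ f (a, c, b) = f (a, b, c))

include hs in
theorem rearrangements_subset {a b c : ℕ} (habc : (a, b, c) ∈ s) :
    rearrangements a b c ⊆ s := by
  have hbac := (hs _ _ _ habc).1
  have hacb := (hs _ _ _ habc).2
  have hbca := (hs _ _ _ hbac).2
  have hcab := (hs _ _ _ hacb).1
  have hcba := (hs _ _ _ hbca).1
  simp only [rearrangements, insert_subset_iff, singleton_subset_iff]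
  exact ⟨habc, hacb, hbac, hbca, hcab, hcba⟩

include hs in
theorem filter_sort3_eq_rearrangements {a b c : ℕ} (habc : (a, b, c) ∈ s) (hab : a ≤ b)
    (hbc : b ≤ c) : s.filter (fun t => sort3 t = (a, b, c)) = rearrangements a b c := by
  ext t
  rw [mem_filter]
  constructor
  · rintro ⟨-, ht⟩
    simpa [ht] using mem_rearrangements_sort3 t
  · intro ht
    refine ⟨rearrangements_subset s hs habc ht, ?_⟩
    simp only [rearrangements, mem_insert, mem_singleton] at ht
    rcases ht with rfl | rfl | rfl | rfl | rfl | rfl <;> simp only [sort3, Prod.mk.injEq] <;> omega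

include hf in
theorem sum_rearrangements (a b c : ℕ) :
    ∑ t ∈ rearrangements a b c, f t = (rearrangements a b c).card • f (a, b, c) := by
  rw [← sum_const]
  refine sum_congr rfl ?_
  simp only [rearrangements, mem_insert, mem_singleton]
  rintro t (rfl | rfl | rfl | rfl | rfl | rfl) <;> simp only [hf]

include hs hf in
theorem sum_eq_sum_sorted_nsmul :
    ∑ t ∈ s, f t =
      ∑ t ∈ s with t.1 ≤ t.2.1 ∧ t.2.1 ≤ t.2.2, numRearrangements t • f t := by
  have hsort : ∀ t ∈ s, sort3 t ∈ s.filter (fun t => t.1 ≤ t.2.1 ∧ t.2.1 ≤ t.2.2) := by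
    intro t ht
    refine mem_filter.2 ⟨rearrangements_subset s hs ht (sort3_mem_rearrangements t), ?_⟩
    simp only [sort3]
    omega
  rw [← sum_fiberwise_of_maps_to hsort]
  refine sum_congr rfl fun ⟨a, b, c⟩ h => ?_
  obtain ⟨habc, hab, hbc⟩ := mem_filter.1 h
  rw [filter_sort3_eq_rearrangements s hs habc hab hbc, sum_rearrangements f hf,
    card_rearrangements hab hbc]

end Symmetrization

def pairCompositions (n : ℕ) : Finset (ℕ × ℕ) :=
  (Icc 1 n ×ˢ Icc 1 n).filter fun p => p.1 + p.2 = n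

def tripleCompositions (n : ℕ) : Finset (ℕ × ℕ × ℕ) :=
  (Icc 1 n ×ˢ Icc 1 n ×ˢ Icc 1 n).filter fun t => t.1 + t.2.1 + t.2.2 = n

/-- The triples `(i, j, k)` of side lengths (counted in polygon edges) of the triangles inscribed
in the `n`-gon that contain its centre. -/
def centralTriples (n : ℕ) : Finset (ℕ × ℕ × ℕ) :=
  (tripleCompositions n).filter fun t => 2 * t.1 < n ∧ 2 * t.2.1 < n ∧ 2 * t.2.2 < n

def catalanTriple (t : ℕ × ℕ × ℕ) : ℕ :=
  catalan (t.1 - 1) * catalan (t.2.1 - 1) * catalan (t.2.2 - 1)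

theorem catalanTriple_perm (a b c : ℕ) :
    catalanTriple (b, a, c) = catalanTriple (a, b, c) ∧
      catalanTriple (a, c, b) = catalanTriple (a, b, c) := by
  simp only [catalanTriple]
  constructor <;> ring

theorem sum_pairCompositions_catalan {n : ℕ} (hn : 2 ≤ n) :
    ∑ p ∈ pairCompositions n, catalan (p.1 - 1) * catalan (p.2 - 1) = catalan (n - 1) := by
  rw [← sum_Ico_catalan_mul_catalan hn, sum_finset_product' _ (Ico 1 n) (fun i => {n - i})
    (f := fun i j => catalan (i - 1) * catalan (j - 1)) fun p => by
      simp only [pairCompositions, mem_filter, mem_product, mem_Icc, mem_Ico, mem_singleton]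
      omega]
  simp only [sum_singleton]

/-- The term `i = n - 1` on the right has no triple above it (it would need `j + k = 1`);
it is the `catalan (n - 2)` on the left. -/
theorem sum_filter_tripleCompositions_catalanTriple_add {n : ℕ} (hn : 2 ≤ n) (P : ℕ → Prop)
    [DecidablePred P] (hP : P (n - 1)) :
    ∑ t ∈ tripleCompositions n with P t.1, catalanTriple t + catalan (n - 2) =
      ∑ i ∈ Ico 1 n with P i, catalan (i - 1) * catalan (n - i - 1) := by
  have hfirst : ∑ t ∈ tripleCompositions n with P t.1, catalanTriple t =
      ∑ i ∈ Ico 1 (n - 1) with P i, catalan (i - 1) * catalan (n - i - 1) := by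
    rw [sum_finset_product _ ((Ico 1 (n - 1)).filter P) (fun i => pairCompositions (n - i))
      fun t => by
        simp only [tripleCompositions, pairCompositions, mem_filter, mem_product, mem_Icc, mem_Ico]
        constructor
        · rintro ⟨h, hPt⟩
          exact ⟨⟨by omega, hPt⟩, by omega⟩
        · rintro ⟨⟨h, hPt⟩, h'⟩
          exact ⟨by omega, hPt⟩]
    refine sum_congr rfl fun i hi => ?_
    simp only [mem_filter, mem_Ico] at hi
    simp only [catalanTriple, mul_assoc, ← mul_sum,
      sum_pairCompositions_catalan (by omega : 2 ≤ n - i)]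
  obtain ⟨m, rfl⟩ : ∃ m, n = m + 2 := ⟨n - 2, by omega⟩
  rw [show m + 2 - 1 = m + 1 by omega] at hP hfirst
  rw [hfirst, sum_filter, sum_filter, sum_Ico_succ_top (show 1 ≤ m + 1 by omega), if_pos hP]
  simp

theorem sum_tripleCompositions_eq_sum_centralTriples_add (f : ℕ × ℕ × ℕ → M)
    (hf : ∀ a b c, f (b, a, c) = f (a, b, c) ∧ f (a, c, b) = f (a, b, c)) (n : ℕ) :
    ∑ t ∈ tripleCompositions n, f t =
      ∑ t ∈ centralTriples n, f t +
        3 • ∑ t ∈ tripleCompositions n with n ≤ 2 * t.1, f t := by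
  have hsplit : ∑ t ∈ tripleCompositions n, f t = ∑ t ∈ centralTriples n, f t +
      ∑ t ∈ tripleCompositions n with n ≤ 2 * t.1, f t +
      ∑ t ∈ tripleCompositions n with n ≤ 2 * t.2.1, f t +
      ∑ t ∈ tripleCompositions n with n ≤ 2 * t.2.2, f t := by
    simp only [centralTriples, sum_filter, ← sum_add_distrib]
    refine sum_congr rfl fun t ht => ?_
    simp only [tripleCompositions, mem_filter, mem_product, mem_Icc] at ht
    split_ifs <;> first | omega | simp only [add_zero, zero_add]
  have hsecond : ∑ t ∈ tripleCompositions n with n ≤ 2 * t.2.1, f t =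
      ∑ t ∈ tripleCompositions n with n ≤ 2 * t.1, f t := by
    refine sum_nbij' (fun t => (t.2.1, t.1, t.2.2)) (fun t => (t.2.1, t.1, t.2.2))
      ?_ ?_ (fun _ _ => rfl) (fun _ _ => rfl) fun t _ => (hf _ _ _).1.symm <;>
    · intro t ht
      simp only [tripleCompositions, mem_filter, mem_product, mem_Icc] at ht ⊢
      omega
  have hthird : ∑ t ∈ tripleCompositions n with n ≤ 2 * t.2.2, f t =
      ∑ t ∈ tripleCompositions n with n ≤ 2 * t.1, f t := by
    refine sum_nbij' (fun t => (t.2.2, t.2.1, t.1)) (fun t => (t.2.2, t.2.1, t.1))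
      ?_ ?_ (fun _ _ => rfl) (fun _ _ => rfl)
      fun ⟨a, b, c⟩ _ => (by simp only [(hf _ _ _).1, (hf _ _ _).2]) <;>
    · intro t ht
      simp only [tripleCompositions, mem_filter, mem_product, mem_Icc] at ht ⊢
      omega
  rw [hsplit, hsecond, hthird]
  abel

theorem mul_sum_centralTriples (n : ℕ) :
    n * ∑ t ∈ centralTriples n, catalanTriple t =
      3 * ∑ t ∈ (Icc 1 n ×ˢ Icc 1 n ×ˢ Icc 1 n).filter (fun t =>
          t.1 + t.2.1 + t.2.2 = n ∧ t.1 ≤ t.2.1 ∧ t.2.1 ≤ t.2.2 ∧ 2 * t.2.2 < n),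
        (if t.1 = t.2.2 then n / 3 else if t.1 = t.2.1 ∨ t.2.1 = t.2.2 then n else 2 * n) *
          (catalan (t.1 - 1) * catalan (t.2.1 - 1) * catalan (t.2.2 - 1)) := by
  have hs : ∀ a b c, (a, b, c) ∈ centralTriples n →
      (b, a, c) ∈ centralTriples n ∧ (a, c, b) ∈ centralTriples n := by
    intro a b c h
    simp only [centralTriples, tripleCompositions, mem_filter, mem_product, mem_Icc] at h ⊢
    omega
  have hsorted : (Icc 1 n ×ˢ Icc 1 n ×ˢ Icc 1 n).filter
      (fun t => t.1 + t.2.1 + t.2.2 = n ∧ t.1 ≤ t.2.1 ∧ t.2.1 ≤ t.2.2 ∧ 2 * t.2.2 < n) =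
      (centralTriples n).filter fun t => t.1 ≤ t.2.1 ∧ t.2.1 ≤ t.2.2 := by
    ext t
    simp only [centralTriples, tripleCompositions, mem_filter, mem_product, mem_Icc]
    omega
  rw [sum_eq_sum_sorted_nsmul _ hs _ catalanTriple_perm, hsorted, mul_sum, mul_sum]
  refine sum_congr rfl fun t ht => ?_
  simp only [centralTriples, tripleCompositions, mem_filter, mem_product, mem_Icc] at ht
  rw [smul_eq_mul, ← mul_assoc, ← mul_assoc, catalanTriple, numRearrangements]
  congr 1
  split_ifs <;> omega

end CatalanCentral

open CatalanCentral

/-- The central-component recursion for Catalan numbers: for `n ≥ 3`,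
`C_{n-2} = (n/2) C_{n/2-1}^2 + ∑_{i+j+k=n, i ≤ j ≤ k < n/2} m_{ijk} C_{i-1} C_{j-1} C_{k-1}`,
where the first term is `0` when `n` is odd, and `m_{ijk}` is `n/3` if `i = j = k`,
`n` if exactly two of `i, j, k` are equal, and `2n` if `i < j < k`. -/
theorem catalan_central_recursion (n : ℕ) (hn : 3 ≤ n) :
    catalan (n - 2) =
      (if n % 2 = 0 then (n / 2) * catalan (n / 2 - 1) ^ 2 else 0) +
      ∑ t ∈ (Finset.Icc 1 n ×ˢ Finset.Icc 1 n ×ˢ Finset.Icc 1 n).filter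
          (fun t => t.1 + t.2.1 + t.2.2 = n ∧ t.1 ≤ t.2.1 ∧ t.2.1 ≤ t.2.2 ∧ 2 * t.2.2 < n),
        (if t.1 = t.2.2 then n / 3
          else if t.1 = t.2.1 ∨ t.2.1 = t.2.2 then n else 2 * n) *
          (catalan (t.1 - 1) * catalan (t.2.1 - 1) * catalan (t.2.2 - 1)) := by
  have hsym := mul_sum_centralTriples n
  have hpart := sum_tripleCompositions_eq_sum_centralTriples_add _ catalanTriple_perm n
  have hall := sum_filter_tripleCompositions_catalanTriple_add (n := n) (by omega)
    (fun _ => True) trivial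
  have hlarge := sum_filter_tripleCompositions_catalanTriple_add (n := n) (by omega)
    (n ≤ 2 * ·) (by omega)
  have hconv := sum_Ico_catalan_mul_catalan (by omega : 2 ≤ n)
  have hreflect := two_nsmul_sum_Ico_filter_le_two_mul
    (fun i => catalan (i - 1) * catalan (n - i - 1)) fun i hi => by
      rw [mem_Ico] at hi
      rw [show n - (n - i) - 1 = i - 1 by omega, mul_comm]
  have hmiddle := two_mul_ite_half_mul_catalan_sq (by omega : 0 < n)
  have hrec := mul_catalan_sub_one_add (by omega : 2 ≤ n)
  simp only [filter_true, smul_eq_mul] at hall hpart hreflect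
  refine Nat.eq_of_mul_eq_mul_left (by norm_num : 0 < 6) ?_
  linear_combination 2 * n * hpart - 2 * n * hall + 6 * n * hlarge + 3 * n * hreflect +
    n * hconv + 2 * hsym + hrec - 3 * hmiddle
end

section
/- The number a(n) of triangulations of a convex n-gon whose central component does not contain the vertex 0 equals ∑_{m=1}^{⌊n/2⌋ - 1} C_m * C_{n-2-m}. -/
/-- A diagonal of a convex `n`-gon with vertices `0, 1, ..., n-1`, encoded as a pair
`(a, b)` with `a < b`, joining two non-adjacent vertices. -/
def IsDiagonal (n : ℕ) (d : ℕ × ℕ) : Prop :=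
  d.2 < n ∧ d.1 + 2 ≤ d.2 ∧ d.2 + 2 ≤ d.1 + n

/-- Two diagonals (each encoded as an increasing pair) cross in the interior of the
polygon. -/
def Crossing (d e : ℕ × ℕ) : Prop :=
  (d.1 < e.1 ∧ e.1 < d.2 ∧ d.2 < e.2) ∨ (e.1 < d.1 ∧ d.1 < e.2 ∧ e.2 < d.2)

/-- A triangulation of a convex `n`-gon: a set of `n - 3` pairwise non-crossing
diagonals. -/
def IsTriangulation (n : ℕ) (T : Finset (ℕ × ℕ)) : Prop :=
  T.card = n - 3 ∧ (∀ d ∈ T, IsDiagonal n d) ∧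
    ∀ d ∈ T, ∀ e ∈ T, d ≠ e → ¬ Crossing d e

/-- The central component of the triangulation `T` (the diameter or triangle containing
the center of the regular `n`-gon) does not contain the vertex `0`: some diagonal of `T`
separates vertex `0` from the center, i.e. there is a diagonal `(a, b)` with `a ≥ 1`
whose cyclic length `b - a` is at least `n/2`. -/
def CentralAvoidsZero (n : ℕ) (T : Finset (ℕ × ℕ)) : Prop :=
  ∃ d ∈ T, 1 ≤ d.1 ∧ n ≤ 2 * (d.2 - d.1)

/-!
Label the polygon `0, 1, …, n - 1`. If the central component avoids `0`, a longest diagonal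
`(a, b)` of the triangulation with `1 ≤ a` and `n ≤ 2 (b - a)` forms a triangle of the
triangulation with the vertex `0`; two such *separating triangles* would overlap, so it is
unique. Cutting along its sides leaves triangulations of the polygons `0..a`, `a..b` and
`b..n-1` plus `0` (relabel `0` as `n`), so `C_{a-1} C_{b-a-1} C_{n-1-b}` triangulations contain
it. The same cut along the triangle on the side `(l, r)` of the polygon `l..r` gives the Catalan
recursion for the number of its triangulations. Grouping the pairs `(a, b)` by
`m = n - 1 - (b - a)` and summing over `a` by Catalan convolution yields `∑ C_m C_{n-2-m}`.
-/

open Finset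

lemma card_filter_exists_eq_sum {α ι : Type*} [DecidableEq α] (s : Finset α) (I : Finset ι)
    (P : ι → α → Prop) [∀ i, DecidablePred (P i)]
    (huniq : ∀ x ∈ s, ∀ i ∈ I, ∀ j ∈ I, P i x → P j x → i = j) :
    (s.filter fun x => ∃ i ∈ I, P i x).card = ∑ i ∈ I, (s.filter (P i)).card := by
  rw [← card_biUnion]
  · congr 1
    ext x
    simp only [mem_filter, mem_biUnion]
    tauto
  · intro i hi j hj hij
    refine disjoint_left.2 fun x hxi hxj => hij ?_
    rw [mem_filter] at hxi hxj
    exact huniq x hxi.1 i (mem_coe.1 hi) j (mem_coe.1 hj) hxi.2 hxj.2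

/-- The diagonals of the convex polygon with vertices `l, l + 1, …, r`, whose sides are the
pairs `(i, i + 1)` and `(l, r)`. -/
def chords (l r : ℕ) : Finset (ℕ × ℕ) :=
  (Icc l r ×ˢ Icc l r).filter fun d => d.1 + 2 ≤ d.2 ∧ ¬(d.1 = l ∧ d.2 = r)

lemma mem_chords {l r : ℕ} {d : ℕ × ℕ} :
    d ∈ chords l r ↔ l ≤ d.1 ∧ d.1 + 2 ≤ d.2 ∧ d.2 ≤ r ∧ ¬(d.1 = l ∧ d.2 = r) := by
  simp only [chords, mem_filter, mem_product, mem_Icc]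
  omega

lemma crossing_comm {d e : ℕ × ℕ} : Crossing d e ↔ Crossing e d := by
  unfold Crossing
  tauto

def NonCrossing (S : Finset (ℕ × ℕ)) : Prop :=
  (S : Set (ℕ × ℕ)).Pairwise fun d e => ¬ Crossing d e

lemma NonCrossing.mono {S T : Finset (ℕ × ℕ)} (hT : NonCrossing T) (h : S ⊆ T) :
    NonCrossing S :=
  Set.Pairwise.mono (coe_subset.2 h) hT

lemma exists_unstraddled_of_nonCrossing {l r : ℕ} {S : Finset (ℕ × ℕ)} (hS : S ⊆ chords l r)
    (hnc : NonCrossing S) (hne : S.Nonempty) :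
    ∃ w, l < w ∧ w < r ∧ ∀ d ∈ S, d.2 ≤ w ∨ w ≤ d.1 := by
  have hmem : ∀ d ∈ S, _ := fun d hd => mem_chords.1 (hS hd)
  obtain ⟨c, hc, hmax⟩ := exists_max_image S (fun d => d.2 - d.1) hne
  have := hmem c hc
  -- an endpoint of a longest chord, other than `l`
  refine ⟨if l < c.1 then c.1 else c.2, by split_ifs <;> omega, by split_ifs <;> omega,
    fun d hd => ?_⟩
  by_contra! hd'
  have hdc : d ≠ c := by rintro rfl; split_ifs at hd' <;> omega
  have := hnc hd hc hdc
  have := hmax d hd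
  have := hmem d hd
  unfold Crossing at *
  split_ifs at hd' <;> omega

lemma card_le_of_nonCrossing {l r : ℕ} {S : Finset (ℕ × ℕ)} (hS : S ⊆ chords l r)
    (hnc : NonCrossing S) : S.card ≤ r - l - 2 := by
  induction h : r - l using Nat.strong_induction_on generalizing l r S with
  | _ k ih =>
  subst h
  rcases S.eq_empty_or_nonempty with rfl | hne
  · simp
  have hmem : ∀ d ∈ S, _ := fun d hd => mem_chords.1 (hS hd)
  obtain ⟨w, hlw, hwr, hsplit⟩ := exists_unstraddled_of_nonCrossing hS hnc hne
  -- the bound for a part of `S` inside a smaller polygon, which may also contain its side `(x, y)`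
  have hpart : ∀ x y, l ≤ x → y ≤ r → y - x < r - l → ∀ S' ⊆ S,
      (∀ d ∈ S', x ≤ d.1 ∧ d.2 ≤ y) → S'.card ≤ y - x - 1 := by
    intro x y hlx hyr hlt S' hS' hxy
    rcases S'.eq_empty_or_nonempty with rfl | ⟨d, hd⟩
    · simp
    have hsub : S'.erase (x, y) ⊆ chords x y := fun e he => by
      have := hmem e (hS' (mem_of_mem_erase he))
      have := hxy e (mem_of_mem_erase he)
      have := ne_of_mem_erase he
      rw [mem_chords]
      exact ⟨by omega, by omega, by omega, fun h => ‹e ≠ (x, y)› (Prod.ext h.1 h.2)⟩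
    have := ih _ hlt hsub ((hnc.mono hS').mono (erase_subset _ _)) rfl
    have := pred_card_le_card_erase (s := S') (a := (x, y))
    have := hmem d (hS' hd)
    have := hxy d hd
    omega
  have h₁ := hpart l w le_rfl (by omega) (by omega) (S.filter (·.2 ≤ w)) (filter_subset _ _)
    fun d hd => ⟨(hmem d (mem_filter.1 hd).1).1, (mem_filter.1 hd).2⟩
  have h₂ := hpart w r (by omega) le_rfl (by omega) (S.filter (¬ ·.2 ≤ w)) (filter_subset _ _)
    fun d hd => by
      have := hsplit d (mem_filter.1 hd).1
      exact ⟨by have := (mem_filter.1 hd).2; omega, (hmem d (mem_filter.1 hd).1).2.2.1⟩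
  have := card_filter_add_card_filter_not (s := S) (·.2 ≤ w)
  omega

open Classical in
noncomputable def triangulations (l r : ℕ) : Finset (Finset (ℕ × ℕ)) :=
  (chords l r).powerset.filter fun T => T.card = r - l - 2 ∧ NonCrossing T

lemma mem_triangulations {l r : ℕ} {T : Finset (ℕ × ℕ)} :
    T ∈ triangulations l r ↔ T ⊆ chords l r ∧ T.card = r - l - 2 ∧ NonCrossing T := by
  simp [triangulations]

lemma triangulations_eq_singleton_of_le {l r : ℕ} (h : r ≤ l + 2) : triangulations l r = {∅} := by
  have hc : chords l r = ∅ := eq_empty_of_forall_notMem fun d hd => by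
    rw [mem_chords] at hd; omega
  ext T
  rw [mem_triangulations, hc, subset_empty, mem_singleton]
  constructor
  · exact fun h => h.1
  · rintro rfl
    exact ⟨rfl, by simp; omega, by simp [NonCrossing]⟩

lemma mem_of_forall_not_crossing {l r : ℕ} {T : Finset (ℕ × ℕ)} {c : ℕ × ℕ}
    (hT : T ∈ triangulations l r) (hc : c ∈ chords l r)
    (h : ∀ d ∈ T, ¬ Crossing c d) : c ∈ T := by
  obtain ⟨hsub, hcard, hnc⟩ := mem_triangulations.1 hT
  by_contra hcT
  have hnc' : NonCrossing (insert c T) := by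
    rw [NonCrossing, coe_insert]
    exact hnc.insert fun d hd _ => ⟨h d hd, crossing_comm.not.1 (h d hd)⟩
  have := card_le_of_nonCrossing (insert_subset hc hsub) hnc'
  rw [card_insert_of_notMem hcT, hcard] at this
  omega

def triangleChords (l r a b : ℕ) : Finset (ℕ × ℕ) :=
  ({(l, a), (a, b), (l, b)} : Finset (ℕ × ℕ)).filter (· ∈ chords l r)

/-- The triangle `l < a < b` is a face of the triangulation `T` of the polygon `l..r`: those of
its sides that are diagonals lie in `T`. -/
def HasTriangle (l r a b : ℕ) (T : Finset (ℕ × ℕ)) : Prop :=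
  triangleChords l r a b ⊆ T

instance (l r a b : ℕ) : DecidablePred (HasTriangle l r a b) :=
  fun T => inferInstanceAs (Decidable (triangleChords l r a b ⊆ T))

lemma mem_triangleChords {l r a b : ℕ} {d : ℕ × ℕ} (hla : l < a) (hab : a < b) (hbr : b ≤ r) :
    d ∈ triangleChords l r a b ↔ (d.1 = l ∧ d.2 = a ∧ l + 2 ≤ a) ∨
      (d.1 = a ∧ d.2 = b ∧ a + 2 ≤ b) ∨ (d.1 = l ∧ d.2 = b ∧ b < r) := by
  obtain ⟨x, y⟩ := d
  simp only [triangleChords, mem_filter, mem_insert, mem_singleton, Prod.mk.injEq, mem_chords]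
  omega

lemma card_triangleChords {l r a b : ℕ} (hla : l < a) (hab : a < b) (hbr : b ≤ r) :
    (triangleChords l r a b).card =
      (if l + 2 ≤ a then 1 else 0) + (if a + 2 ≤ b then 1 else 0) + (if b < r then 1 else 0) := by
  rw [triangleChords, card_filter, sum_insert (by simp; omega), sum_insert (by simp; omega),
    sum_singleton]
  have h₁ : (l, a) ∈ chords l r ↔ l + 2 ≤ a := by rw [mem_chords]; omega
  have h₂ : (a, b) ∈ chords l r ↔ a + 2 ≤ b := by rw [mem_chords]; omega
  have h₃ : (l, b) ∈ chords l r ↔ b < r := by rw [mem_chords]; omega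
  simp only [h₁, h₂, h₃, add_assoc]

/-- Relabelling the vertex `r + 1` as `l` identifies the polygon `b..r+1` with the polygon with
vertices `l, b, b + 1, …, r`. -/
def wrap (l r : ℕ) (d : ℕ × ℕ) : ℕ × ℕ :=
  if d.2 = r + 1 then (l, d.1) else d

lemma mem_image_wrap {l r b : ℕ} {d : ℕ × ℕ} (hlb : l < b) :
    d ∈ (chords b (r + 1)).image (wrap l r) ↔
      (b ≤ d.1 ∧ d.1 + 2 ≤ d.2 ∧ d.2 ≤ r) ∨ (d.1 = l ∧ b < d.2 ∧ d.2 < r) := by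
  constructor
  · rintro h
    obtain ⟨e, he, rfl⟩ := mem_image.1 h
    rw [mem_chords] at he
    unfold wrap
    split_ifs <;> omega
  · intro h
    refine mem_image.2 ⟨if d.1 = l then (d.2, r + 1) else d, ?_, ?_⟩
    · rw [mem_chords]
      split_ifs <;> omega
    · unfold wrap
      obtain ⟨x, y⟩ := d
      split_ifs <;> simp_all

lemma wrap_injOn {l r b : ℕ} (hlb : l < b) : Set.InjOn (wrap l r) (chords b (r + 1)) := by
  rintro ⟨x, y⟩ he ⟨x', y'⟩ hf h
  rw [mem_coe, mem_chords] at he hf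
  unfold wrap at h
  simp only at h he hf
  split_ifs at h <;> simp only [Prod.mk.injEq] at h ⊢ <;> omega

lemma crossing_wrap_iff {l r b : ℕ} {e f : ℕ × ℕ} (hlb : l < b) (he : e ∈ chords b (r + 1))
    (hf : f ∈ chords b (r + 1)) : Crossing (wrap l r e) (wrap l r f) ↔ Crossing e f := by
  rw [mem_chords] at he hf
  unfold wrap Crossing
  split_ifs <;> simp only <;> omega

def glue (l r a b : ℕ) (T₁ T₂ T₃ : Finset (ℕ × ℕ)) : Finset (ℕ × ℕ) :=
  T₁ ∪ T₂ ∪ T₃.image (wrap l r) ∪ triangleChords l r a b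

def pieces (l r a b : ℕ) (T : Finset (ℕ × ℕ)) :
    Finset (ℕ × ℕ) × Finset (ℕ × ℕ) × Finset (ℕ × ℕ) :=
  (chords l a ∩ T, chords a b ∩ T, (chords b (r + 1)).filter (wrap l r · ∈ T))

section Glue

variable {l r a b : ℕ} {T₁ T₂ T₃ : Finset (ℕ × ℕ)}

lemma mem_glue (hT₁ : T₁ ⊆ chords l a) (hT₂ : T₂ ⊆ chords a b) (hT₃ : T₃ ⊆ chords b (r + 1))
    {d : ℕ × ℕ} :
    d ∈ glue l r a b T₁ T₂ T₃ ↔ (d ∈ T₁ ∧ d ∈ chords l a) ∨ (d ∈ T₂ ∧ d ∈ chords a b) ∨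
      (d ∈ T₃.image (wrap l r) ∧ d ∈ (chords b (r + 1)).image (wrap l r)) ∨
      d ∈ triangleChords l r a b := by
  simp only [glue, mem_union]
  have := @hT₁ d; have := @hT₂ d; have := @image_subset_image _ _ _ (wrap l r) _ _ hT₃ d
  tauto

lemma glue_subset_chords (hla : l < a) (hab : a < b) (hbr : b ≤ r) (hT₁ : T₁ ⊆ chords l a)
    (hT₂ : T₂ ⊆ chords a b) (hT₃ : T₃ ⊆ chords b (r + 1)) :
    glue l r a b T₁ T₂ T₃ ⊆ chords l r := by
  intro d hd
  rw [mem_glue hT₁ hT₂ hT₃] at hd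
  simp only [mem_chords, mem_image_wrap (show l < b by omega), mem_triangleChords hla hab hbr]
    at hd ⊢
  omega

lemma nonCrossing_glue (hla : l < a) (hab : a < b) (hbr : b ≤ r) (hT₁ : T₁ ⊆ chords l a)
    (hT₂ : T₂ ⊆ chords a b) (hT₃ : T₃ ⊆ chords b (r + 1)) (h₁ : NonCrossing T₁)
    (h₂ : NonCrossing T₂) (h₃ : NonCrossing T₃) : NonCrossing (glue l r a b T₁ T₂ T₃) := by
  have hlb : l < b := by omega
  have h₃' : NonCrossing (T₃.image (wrap l r)) := by
    rw [NonCrossing, coe_image]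
    rintro _ ⟨e, he, rfl⟩ _ ⟨f, hf, rfl⟩ hne
    rw [crossing_wrap_iff hlb (hT₃ he) (hT₃ hf)]
    exact h₃ he hf fun h => hne (h ▸ rfl)
  intro d hd e he hne
  rw [mem_coe, mem_glue hT₁ hT₂ hT₃] at hd he
  rcases hd with ⟨hd, hd'⟩ | ⟨hd, hd'⟩ | ⟨hd, hd'⟩ | hd' <;>
    rcases he with ⟨he, he'⟩ | ⟨he, he'⟩ | ⟨he, he'⟩ | he'
  all_goals first
    | exact h₁ hd he hne
    | exact h₂ hd he hne
    | exact h₃' hd he hne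
    | simp only [mem_chords, mem_image_wrap hlb, mem_triangleChords hla hab hbr] at hd' he'
      rw [Ne, Prod.ext_iff] at hne
      unfold Crossing
      omega

lemma card_glue (hla : l < a) (hab : a < b) (hbr : b ≤ r) (hT₁ : T₁ ⊆ chords l a)
    (hT₂ : T₂ ⊆ chords a b) (hT₃ : T₃ ⊆ chords b (r + 1)) :
    (glue l r a b T₁ T₂ T₃).card =
      T₁.card + T₂.card + T₃.card + (triangleChords l r a b).card := by
  have hlb : l < b := by omega
  have h₁₂ : Disjoint (chords l a) (chords a b) := disjoint_left.2 fun d h h' => by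
    rw [mem_chords] at h h'; omega
  have h₁₂₃ : Disjoint (chords l a ∪ chords a b) ((chords b (r + 1)).image (wrap l r)) :=
    disjoint_left.2 fun d h h' => by
      simp only [mem_union, mem_chords, mem_image_wrap hlb] at h h'; omega
  have h₁₂₃₄ : Disjoint (chords l a ∪ chords a b ∪ (chords b (r + 1)).image (wrap l r))
      (triangleChords l r a b) :=
    disjoint_left.2 fun d h h' => by
      simp only [mem_union, mem_chords, mem_image_wrap hlb, mem_triangleChords hla hab hbr] at h h'
      omega
  have hT₁₂ := union_subset_union hT₁ hT₂
  have hT₁₂₃ := union_subset_union hT₁₂ (image_subset_image (f := wrap l r) hT₃)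
  rw [glue, card_union_of_disjoint (h₁₂₃₄.mono_left hT₁₂₃),
    card_union_of_disjoint ((h₁₂₃.mono_left hT₁₂).mono_right (image_subset_image hT₃)),
    card_union_of_disjoint (h₁₂.mono hT₁ hT₂),
    card_image_of_injOn ((wrap_injOn hlb).mono hT₃)]

lemma pieces_glue (hla : l < a) (hab : a < b) (hbr : b ≤ r) (hT₁ : T₁ ⊆ chords l a)
    (hT₂ : T₂ ⊆ chords a b) (hT₃ : T₃ ⊆ chords b (r + 1)) :
    pieces l r a b (glue l r a b T₁ T₂ T₃) = (T₁, T₂, T₃) := by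
  have hlb : l < b := by omega
  simp only [pieces, Prod.mk.injEq]
  refine ⟨?_, ?_, ?_⟩ <;> ext d <;> simp only [mem_inter, mem_filter, mem_glue hT₁ hT₂ hT₃]
  · refine ⟨?_, fun h => ⟨hT₁ h, Or.inl ⟨h, hT₁ h⟩⟩⟩
    rintro ⟨hd, ⟨h, -⟩ | ⟨-, h⟩ | ⟨-, h⟩ | h⟩
    · exact h
    all_goals
      simp only [mem_chords, mem_image_wrap hlb, mem_triangleChords hla hab hbr] at hd h
      omega
  · refine ⟨?_, fun h => ⟨hT₂ h, Or.inr (Or.inl ⟨h, hT₂ h⟩)⟩⟩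
    rintro ⟨hd, ⟨-, h⟩ | ⟨h, -⟩ | ⟨-, h⟩ | h⟩
    · simp only [mem_chords] at hd h
      omega
    · exact h
    all_goals
      simp only [mem_chords, mem_image_wrap hlb, mem_triangleChords hla hab hbr] at hd h
      omega
  · refine ⟨?_, fun h => ⟨hT₃ h, Or.inr (Or.inr (Or.inl
      ⟨mem_image_of_mem _ h, mem_image_of_mem _ (hT₃ h)⟩))⟩⟩
    rintro ⟨hd, ⟨-, h⟩ | ⟨-, h⟩ | ⟨h, -⟩ | h⟩
    rotate_left 2
    · obtain ⟨e, he, hed⟩ := mem_image.1 h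
      rwa [← wrap_injOn hlb (hT₃ he) hd hed]
    all_goals
      have := (mem_image_wrap hlb).1 (mem_image_of_mem (wrap l r) hd)
      simp only [mem_chords, mem_triangleChords hla hab hbr] at h
      omega

lemma glue_mem_triangulations (hla : l < a) (hab : a < b) (hbr : b ≤ r)
    (h₁ : T₁ ∈ triangulations l a) (h₂ : T₂ ∈ triangulations a b)
    (h₃ : T₃ ∈ triangulations b (r + 1)) : glue l r a b T₁ T₂ T₃ ∈ triangulations l r := by
  obtain ⟨hT₁, hc₁, hn₁⟩ := mem_triangulations.1 h₁
  obtain ⟨hT₂, hc₂, hn₂⟩ := mem_triangulations.1 h₂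
  obtain ⟨hT₃, hc₃, hn₃⟩ := mem_triangulations.1 h₃
  refine mem_triangulations.2 ⟨glue_subset_chords hla hab hbr hT₁ hT₂ hT₃, ?_,
    nonCrossing_glue hla hab hbr hT₁ hT₂ hT₃ hn₁ hn₂ hn₃⟩
  rw [card_glue hla hab hbr hT₁ hT₂ hT₃, card_triangleChords hla hab hbr, hc₁, hc₂, hc₃]
  split_ifs <;> omega

end Glue

section Decompose

variable {l r a b : ℕ} {T : Finset (ℕ × ℕ)}

lemma mem_regions_of_hasTriangle (hla : l < a) (hab : a < b) (hbr : b ≤ r)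
    (hT : T ∈ triangulations l r) (hS : HasTriangle l r a b T) {d : ℕ × ℕ} (hd : d ∈ T) :
    d ∈ chords l a ∨ d ∈ chords a b ∨ d ∈ (chords b (r + 1)).image (wrap l r) ∨
      d ∈ triangleChords l r a b := by
  obtain ⟨hsub, -, hnc⟩ := mem_triangulations.1 hT
  have hdc := mem_chords.1 (hsub hd)
  -- a side of the triangle is either in `T` or a side of the polygon; neither crosses `d`
  have hside : ∀ s ∈ ({(l, a), (a, b), (l, b)} : Finset (ℕ × ℕ)), ¬ Crossing d s := by
    intro s hs hc
    by_cases hsc : s ∈ chords l r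
    · have hsT := hS (mem_filter.2 ⟨hs, hsc⟩)
      rcases eq_or_ne d s with rfl | hne
      · unfold Crossing at hc; omega
      · exact hnc hd hsT hne hc
    · simp only [mem_insert, mem_singleton] at hs
      rw [mem_chords] at hsc
      unfold Crossing at hc
      rcases hs with rfl | rfl | rfl <;> simp only at hsc hc <;> omega
  have h₁ := hside (l, a) (by simp)
  have h₂ := hside (a, b) (by simp)
  have h₃ := hside (l, b) (by simp)
  simp only [mem_chords, mem_image_wrap (show l < b by omega), mem_triangleChords hla hab hbr]
  unfold Crossing at h₁ h₂ h₃
  omega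

lemma glue_pieces (hla : l < a) (hab : a < b) (hbr : b ≤ r) (hT : T ∈ triangulations l r)
    (hS : HasTriangle l r a b T) :
    glue l r a b (pieces l r a b T).1 (pieces l r a b T).2.1 (pieces l r a b T).2.2 = T := by
  ext d
  simp only [glue, pieces, mem_union, mem_inter, mem_image, mem_filter]
  constructor
  · rintro (((⟨-, h⟩ | ⟨-, h⟩) | ⟨e, ⟨-, h⟩, rfl⟩) | h) <;> first | exact h | exact hS h
  · intro hd
    rcases mem_regions_of_hasTriangle hla hab hbr hT hS hd with h | h | h | h
    · exact Or.inl (Or.inl (Or.inl ⟨h, hd⟩))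
    · exact Or.inl (Or.inl (Or.inr ⟨h, hd⟩))
    · obtain ⟨e, he, rfl⟩ := mem_image.1 h
      exact Or.inl (Or.inr ⟨e, ⟨he, hd⟩, rfl⟩)
    · exact Or.inr h

lemma pieces_mem_of_hasTriangle (hla : l < a) (hab : a < b) (hbr : b ≤ r)
    (hT : T ∈ triangulations l r) (hS : HasTriangle l r a b T) :
    pieces l r a b T ∈ triangulations l a ×ˢ triangulations a b ×ˢ triangulations b (r + 1) := by
  obtain ⟨-, hcard, hnc⟩ := mem_triangulations.1 hT
  have hlb : l < b := by omega
  have hglue := glue_pieces hla hab hbr hT hS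
  simp only [pieces, mem_product, mem_triangulations] at hglue ⊢
  set T₁ := chords l a ∩ T
  set T₂ := chords a b ∩ T
  set T₃ := (chords b (r + 1)).filter (wrap l r · ∈ T)
  have hT₁ : T₁ ⊆ chords l a := inter_subset_left
  have hT₂ : T₂ ⊆ chords a b := inter_subset_left
  have hT₃ : T₃ ⊆ chords b (r + 1) := filter_subset _ _
  have hnc₁ : NonCrossing T₁ := hnc.mono inter_subset_right
  have hnc₂ : NonCrossing T₂ := hnc.mono inter_subset_right
  have hnc₃ : NonCrossing T₃ := by
    intro e he f hf hne hc
    rw [mem_coe, mem_filter] at he hf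
    rw [← crossing_wrap_iff hlb he.1 hf.1] at hc
    exact hnc he.2 hf.2 (fun h => hne (wrap_injOn hlb he.1 hf.1 h)) hc
  -- no piece exceeds the size of a triangulation, and together they are exactly as large as `T`
  have hsum := card_glue hla hab hbr hT₁ hT₂ hT₃
  rw [hglue, hcard, card_triangleChords hla hab hbr] at hsum
  have hb₁ := card_le_of_nonCrossing hT₁ hnc₁
  have hb₂ := card_le_of_nonCrossing hT₂ hnc₂
  have hb₃ := card_le_of_nonCrossing hT₃ hnc₃
  refine ⟨⟨hT₁, ?_, hnc₁⟩, ⟨hT₂, ?_, hnc₂⟩, ⟨hT₃, ?_, hnc₃⟩⟩ <;> split_ifs at hsum <;> omega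

end Decompose

lemma card_filter_hasTriangle {l r a b : ℕ} (hla : l < a) (hab : a < b) (hbr : b ≤ r) :
    ((triangulations l r).filter (HasTriangle l r a b)).card =
      (triangulations l a).card * (triangulations a b).card *
        (triangulations b (r + 1)).card := by
  rw [mul_assoc, ← card_product, ← card_product]
  refine (card_nbij' (fun p => glue l r a b p.1 p.2.1 p.2.2) (pieces l r a b) ?_ ?_ ?_ ?_).symm
  · rintro ⟨T₁, T₂, T₃⟩ h
    simp only [mem_coe, mem_product] at h
    exact mem_filter.2 ⟨glue_mem_triangulations hla hab hbr h.1 h.2.1 h.2.2, subset_union_right⟩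
  · intro T hT
    rw [mem_coe, mem_filter] at hT
    exact pieces_mem_of_hasTriangle hla hab hbr hT.1 hT.2
  · rintro ⟨T₁, T₂, T₃⟩ h
    simp only [mem_coe, mem_product, mem_triangulations] at h
    exact pieces_glue hla hab hbr h.1.1 h.2.1.1 h.2.2.1
  · intro T hT
    rw [mem_coe, mem_filter] at hT
    exact glue_pieces hla hab hbr hT.1 hT.2

lemma exists_hasTriangle_apex {l r : ℕ} {T : Finset (ℕ × ℕ)} (hT : T ∈ triangulations l r)
    (hlr : l + 2 ≤ r) : ∃ v ∈ Ioo l r, HasTriangle l r v r T := by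
  obtain ⟨hsub, -, hnc⟩ := mem_triangulations.1 hT
  -- the apex is the farthest neighbour of `l`
  obtain ⟨p, hp, hmax⟩ := exists_max_image (insert (l, l + 1) (T.filter (·.1 = l))) Prod.snd
    ⟨_, mem_insert_self _ _⟩
  obtain ⟨v, hpv⟩ : ∃ v, p = (l, v) := ⟨p.2, by
    rcases mem_insert.1 hp with rfl | hp
    · rfl
    · exact Prod.ext (mem_filter.1 hp).2 rfl⟩
  subst hpv
  have hlv : l + 2 ≤ v → (l, v) ∈ T := fun h => by
    rcases mem_insert.1 hp with hp | hp
    · have := (Prod.ext_iff.1 hp).2; omega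
    · exact (mem_filter.1 hp).1
  have hv : l < v ∧ v < r := by
    rcases mem_insert.1 hp with hp | hp
    · have := (Prod.ext_iff.1 hp).2; omega
    · have := mem_chords.1 (hsub (mem_filter.1 hp).1)
      simp only [le_refl, true_and] at this
      omega
  have hstraddle : ∀ d ∈ T, ¬ (d.1 < v ∧ v < d.2) := by
    rintro d hd ⟨h₁, h₂⟩
    have hd' := mem_chords.1 (hsub hd)
    by_cases hdl : d.1 = l
    · have := hmax d (mem_insert_of_mem (mem_filter.2 ⟨hd, hdl⟩)); omega
    · refine hnc hd (hlv (by omega)) (by rintro rfl; exact hdl rfl) ?_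
      unfold Crossing; simp only; omega
  refine ⟨v, mem_Ioo.2 hv, fun ⟨x, y⟩ hd => ?_⟩
  rcases (mem_triangleChords hv.1 hv.2 le_rfl).1 hd with ⟨rfl, rfl, h⟩ | ⟨rfl, rfl, h⟩ | ⟨-, -, h⟩
  · exact hlv h
  · refine mem_of_forall_not_crossing hT (mem_chords.2 (by simp only; omega)) fun e he hc => ?_
    have := hstraddle e he
    have := mem_chords.1 (hsub he)
    unfold Crossing at hc; simp only at hc; omega
  · omega

lemma hasTriangle_apex_unique {l r v v' : ℕ} {T : Finset (ℕ × ℕ)}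
    (hT : T ∈ triangulations l r) (hv : v ∈ Ioo l r) (hv' : v' ∈ Ioo l r)
    (h : HasTriangle l r v r T) (h' : HasTriangle l r v' r T) : v = v' := by
  by_contra hne
  wlog hlt : v < v' generalizing v v'
  · exact this hv' hv h' h (Ne.symm hne) (by omega)
  rw [mem_Ioo] at hv hv'
  have h₁ : (l, v') ∈ T :=
    h' ((mem_triangleChords hv'.1 hv'.2 le_rfl).2 (Or.inl ⟨rfl, rfl, by omega⟩))
  have h₂ : (v, r) ∈ T :=
    h ((mem_triangleChords hv.1 hv.2 le_rfl).2 (Or.inr (Or.inl ⟨rfl, rfl, by omega⟩)))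
  exact (mem_triangulations.1 hT).2.2 h₁ h₂ (by simp only [ne_eq, Prod.mk.injEq]; omega)
    (by unfold Crossing; simp only; omega)

lemma sum_Ioo_catalan_mul_catalan {l r : ℕ} (h : l + 2 ≤ r) :
    ∑ v ∈ Ioo l r, catalan (v - l - 1) * catalan (r - v - 1) = catalan (r - l - 1) := by
  rw [show r - l - 1 = (r - l - 2) + 1 by omega, catalan_succ']
  refine sum_nbij' (fun v => (v - l - 1, r - v - 1)) (fun p => l + 1 + p.1) ?_ ?_ ?_ ?_ ?_
  all_goals first
    | intro v hv; rfl
    | intro v hv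
      simp only [mem_Ioo, HasAntidiagonal.mem_antidiagonal, Prod.ext_iff] at hv ⊢
      omega

lemma card_triangulations {l r : ℕ} (h : l < r) :
    (triangulations l r).card = catalan (r - l - 1) := by
  induction hk : r - l using Nat.strong_induction_on generalizing l r with
  | _ k ih =>
  subst hk
  rcases Nat.lt_or_ge r (l + 3) with hsmall | hlr
  · rw [triangulations_eq_singleton_of_le (by omega), card_singleton]
    obtain h | h : r - l - 1 = 0 ∨ r - l - 1 = 1 := by omega
    all_goals simp [h]
  have hcover : triangulations l r =
      (triangulations l r).filter fun T => ∃ v ∈ Ioo l r, HasTriangle l r v r T :=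
    (filter_true_of_mem fun T hT => exists_hasTriangle_apex hT (by omega)).symm
  rw [hcover, card_filter_exists_eq_sum _ _ (fun v T => HasTriangle l r v r T)
      fun T hT v hv v' hv' => hasTriangle_apex_unique hT hv hv',
    ← sum_Ioo_catalan_mul_catalan (by omega)]
  refine sum_congr rfl fun v hv => ?_
  rw [mem_Ioo] at hv
  rw [card_filter_hasTriangle hv.1 hv.2 le_rfl, ih _ (by omega) hv.1 rfl, ih _ (by omega) hv.2 rfl,
    ih _ (by omega) (Nat.lt_succ_self r) rfl]
  simp

lemma mem_triangulations_iff_isTriangulation {n : ℕ} {T : Finset (ℕ × ℕ)} :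
    T ∈ triangulations 0 (n - 1) ↔ IsTriangulation n T := by
  have hdiag : ∀ d, d ∈ chords 0 (n - 1) ↔ IsDiagonal n d := fun d => by
    rw [mem_chords, IsDiagonal]; omega
  rw [mem_triangulations, IsTriangulation]
  constructor
  · rintro ⟨hsub, hcard, hnc⟩
    exact ⟨by omega, fun d hd => (hdiag d).1 (hsub hd), fun d hd e he => hnc hd he⟩
  · rintro ⟨hcard, hsub, hnc⟩
    exact ⟨fun d hd => (hdiag d).2 (hsub d hd), by omega, fun d hd e he => hnc d hd e he⟩

def separatingChords (n : ℕ) : Finset (ℕ × ℕ) :=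
  (chords 0 (n - 1)).filter fun d => 1 ≤ d.1 ∧ n ≤ 2 * (d.2 - d.1)

lemma centralAvoidsZero_iff_exists_hasTriangle {n : ℕ} {T : Finset (ℕ × ℕ)}
    (hT : T ∈ triangulations 0 (n - 1)) :
    CentralAvoidsZero n T ↔ ∃ d ∈ separatingChords n, HasTriangle 0 (n - 1) d.1 d.2 T := by
  obtain ⟨hsub, -, hnc⟩ := mem_triangulations.1 hT
  constructor
  · rintro ⟨d, hd, hsep⟩
    -- a longest separating chord `(a, b)` of `T` spans a triangle with the vertex `0`
    obtain ⟨⟨a, b⟩, hab, hmax⟩ := exists_max_image (T.filter fun d => 1 ≤ d.1 ∧ n ≤ 2 * (d.2 - d.1))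
      (fun d => d.2 - d.1) ⟨d, mem_filter.2 ⟨hd, hsep⟩⟩
    obtain ⟨habT, ha, hlen⟩ := mem_filter.1 hab
    have hc := mem_chords.1 (hsub habT)
    simp only at ha hlen hc
    have hlongest : ∀ e ∈ T, 0 < e.1 → e.1 ≤ a → b ≤ e.2 → e.1 = a ∧ e.2 = b := by
      intro e he h₁ h₂ h₃
      have := hmax e (mem_filter.2 ⟨he, h₁, by omega⟩)
      omega
    have hcross : ∀ e ∈ T, ¬ Crossing e (a, b) := fun e he hcr => by
      rcases eq_or_ne e (a, b) with rfl | hne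
      · unfold Crossing at hcr; omega
      · exact hnc he habT hne hcr
    have hfan : ∀ x, (x = a ∨ x = b) → 2 ≤ x → x < n - 1 → (0, x) ∈ T := by
      intro x hx h₁ h₂
      refine mem_of_forall_not_crossing hT (mem_chords.2 (by simp only; omega)) fun e he hcr => ?_
      have := hlongest e he
      have := hcross e he
      have := mem_chords.1 (hsub he)
      unfold Crossing at *
      simp only at *
      omega
    refine ⟨(a, b), mem_filter.2 ⟨hsub habT, ha, hlen⟩, fun ⟨x, y⟩ hxy => ?_⟩
    rcases (mem_triangleChords (by omega) (by omega) (by omega)).1 hxy with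
      ⟨rfl, rfl, h⟩ | ⟨rfl, rfl, -⟩ | ⟨rfl, rfl, h⟩
    · exact hfan _ (Or.inl rfl) h (by omega)
    · exact habT
    · exact hfan _ (Or.inr rfl) (by omega) h
  · rintro ⟨⟨a, b⟩, hd, hS⟩
    obtain ⟨hc, ha, hlen⟩ := mem_filter.1 hd
    rw [mem_chords] at hc
    exact ⟨(a, b), hS ((mem_triangleChords (by omega) (by omega) (by omega)).2
      (Or.inr (Or.inl ⟨rfl, rfl, by omega⟩))), ha, hlen⟩

lemma separatingChord_unique {n : ℕ} {T : Finset (ℕ × ℕ)} {d d' : ℕ × ℕ}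
    (hT : T ∈ triangulations 0 (n - 1)) (hd : d ∈ separatingChords n)
    (hd' : d' ∈ separatingChords n) (h : HasTriangle 0 (n - 1) d.1 d.2 T)
    (h' : HasTriangle 0 (n - 1) d'.1 d'.2 T) : d = d' := by
  by_contra hne
  wlog hlt : d.1 < d'.1 ∨ (d.1 = d'.1 ∧ d.2 < d'.2) generalizing d d'
  · refine this hd' hd h' h (Ne.symm hne) ?_
    simp only [Prod.ext_iff] at hne
    omega
  obtain ⟨a, b⟩ := d
  obtain ⟨a', b'⟩ := d'
  simp only [separatingChords, mem_filter, mem_chords] at hd hd' hlt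
  have hnc := (mem_triangulations.1 hT).2.2
  -- two separating triangles overlap: a side through `0` of one crosses the other
  rcases hlt with hlt | ⟨rfl, hlt⟩
  · have h₁ : (0, a') ∈ T := h' ((mem_triangleChords (by omega) (by omega) (by omega)).2
      (Or.inl ⟨rfl, rfl, by omega⟩))
    have h₂ : (a, b) ∈ T := h ((mem_triangleChords (by omega) (by omega) (by omega)).2
      (Or.inr (Or.inl ⟨rfl, rfl, by omega⟩)))
    exact hnc h₁ h₂ (by simp only [ne_eq, Prod.mk.injEq]; omega) (by unfold Crossing; omega)
  · have h₁ : (0, b) ∈ T := h ((mem_triangleChords (by omega) (by omega) (by omega)).2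
      (Or.inr (Or.inr ⟨rfl, rfl, by omega⟩)))
    have h₂ : (a, b') ∈ T := h' ((mem_triangleChords (by omega) (by omega) (by omega)).2
      (Or.inr (Or.inl ⟨rfl, rfl, by omega⟩)))
    exact hnc h₁ h₂ (by simp only [ne_eq, Prod.mk.injEq]; omega) (by unfold Crossing; omega)

lemma sum_separatingChords (n : ℕ) :
    ∑ d ∈ separatingChords n, catalan (d.1 - 1) * catalan (d.2 - d.1 - 1) * catalan (n - 1 - d.2) =
      ∑ m ∈ Icc 1 (n / 2 - 1), catalan m * catalan (n - 2 - m) := by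
  -- group the separating chords `(a, b)` by `m = n - 1 - (b - a)`
  calc _ = ∑ x ∈ (Icc 1 (n / 2 - 1)).sigma (fun m => Ioo 0 (m + 1)),
        catalan (x.2 - 0 - 1) * catalan (x.1 + 1 - x.2 - 1) * catalan (n - 2 - x.1) := by
        refine sum_nbij' (fun d => ⟨n - 1 - (d.2 - d.1), d.1⟩) (fun x => (x.2, x.2 + n - 1 - x.1))
          ?_ ?_ ?_ ?_ ?_
        · rintro ⟨a, b⟩ h
          simp only [separatingChords, mem_filter, mem_chords, mem_sigma, mem_Icc,
            mem_Ioo] at h ⊢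
          omega
        · rintro ⟨m, a⟩ h
          simp only [separatingChords, mem_filter, mem_chords, mem_sigma, mem_Icc,
            mem_Ioo] at h ⊢
          omega
        · rintro ⟨a, b⟩ h
          simp only [separatingChords, mem_filter, mem_chords] at h
          simp only [Prod.mk.injEq, true_and]
          omega
        · rintro ⟨m, a⟩ h
          simp only [mem_sigma, mem_Icc, mem_Ioo] at h
          simp only [Sigma.mk.injEq, heq_eq_eq, and_true]
          omega
        · rintro ⟨a, b⟩ h
          simp only [separatingChords, mem_filter, mem_chords] at h
          dsimp only
          rw [mul_right_comm, Nat.sub_zero, show n - 1 - b = n - 1 - (b - a) + 1 - a - 1 by omega,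
            show b - a - 1 = n - 2 - (n - 1 - (b - a)) by omega]
    _ = _ := by
      rw [sum_sigma]
      refine sum_congr rfl fun m hm => ?_
      dsimp only
      rw [← sum_mul, sum_Ioo_catalan_mul_catalan (by rw [mem_Icc] at hm; omega)]
      simp

theorem card_central_avoids_zero_general (n : ℕ) :
    Nat.card {T : Finset (ℕ × ℕ) // IsTriangulation n T ∧ CentralAvoidsZero n T} =
      ∑ m ∈ Finset.Icc 1 (n / 2 - 1), catalan m * catalan (n - 2 - m) := by
  calc _ = ((triangulations 0 (n - 1)).filter
        fun T => ∃ d ∈ separatingChords n, HasTriangle 0 (n - 1) d.1 d.2 T).card := by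
        rw [← Nat.card_eq_finsetCard]
        refine Nat.card_congr (Equiv.subtypeEquivRight fun T => ?_)
        rw [mem_filter, mem_triangulations_iff_isTriangulation]
        exact and_congr_right fun hT =>
          centralAvoidsZero_iff_exists_hasTriangle (mem_triangulations_iff_isTriangulation.2 hT)
    _ = ∑ d ∈ separatingChords n, ((triangulations 0 (n - 1)).filter
          (HasTriangle 0 (n - 1) d.1 d.2)).card :=
        card_filter_exists_eq_sum (triangulations 0 (n - 1)) (separatingChords n)
          (fun d => HasTriangle 0 (n - 1) d.1 d.2)
          fun T hT d hd d' hd' => separatingChord_unique hT hd hd'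
    _ = ∑ d ∈ separatingChords n,
          catalan (d.1 - 1) * catalan (d.2 - d.1 - 1) * catalan (n - 1 - d.2) := by
        refine sum_congr rfl fun d hd => ?_
        simp only [separatingChords, mem_filter, mem_chords] at hd
        rw [card_filter_hasTriangle (by omega) (by omega) (by omega),
          card_triangulations (by omega), card_triangulations (by omega),
          card_triangulations (by omega)]
        congr 2; omega
    _ = _ := sum_separatingChords n

/-- The number of triangulations of a convex `n`-gon whose central component does not
contain the vertex `0` equals `∑_{m=1}^{⌊n/2⌋-1} C_m C_{n-2-m}`. -/
theorem card_central_avoids_zero (n : ℕ) (hn : 3 ≤ n) :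
    Nat.card {T : Finset (ℕ × ℕ) // IsTriangulation n T ∧ CentralAvoidsZero n T} =
      ∑ m ∈ Finset.Icc 1 (n / 2 - 1), catalan m * catalan (n - 2 - m) :=
  card_central_avoids_zero_general n
end

section
/- If C_n ≡ 2 (mod 4) then n = 2^a + 2^b - 1 for some b > a ≥ 0. -/
/-!
Legendre's formula `v₂(m!) = m - s₂(m)`, with `s₂` the binary digit sum, applied to
`C_n · n! · (n+1)! = (2n)!` gives `v₂(C_n) = s₂(n+1) - 1`, because `s₂(2n) = s₂(n)`.
Hence `C_n ≡ 2 (mod 4)` forces `s₂(n+1) = 2`, i.e. `n + 1` is a sum of two distinct powers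
of two.
-/

open Nat

namespace Nat

lemma digits_sum_pos (b : ℕ) {m : ℕ} (hm : m ≠ 0) : 0 < (digits b m).sum :=
  have hlast := getLast_digit_ne_zero b hm
  (Nat.pos_of_ne_zero hlast).trans_le (List.le_sum_of_mem (List.getLast_mem _))

lemma digits_two_sum_two_mul_add (k : ℕ) {r : ℕ} (hr : r < 2) :
    (digits 2 (2 * k + r)).sum = r + (digits 2 k).sum := by
  rcases Nat.eq_zero_or_pos (2 * k + r) with h0 | hpos
  · obtain ⟨rfl, rfl⟩ : k = 0 ∧ r = 0 := by omega
    simp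
  · rw [digits_def' one_lt_two hpos, List.sum_cons]
    congr 3 <;> omega

lemma digits_two_sum_two_mul (k : ℕ) : (digits 2 (2 * k)).sum = (digits 2 k).sum := by
  simpa using digits_two_sum_two_mul_add k zero_lt_two

lemma padicValNat_two_factorial_add_digits_sum (n : ℕ) :
    padicValNat 2 n ! + (digits 2 n).sum = n := by
  have := @sub_one_mul_padicValNat_factorial 2 ⟨prime_two⟩ n
  have := digit_sum_le 2 n
  omega

lemma catalan_mul_factorial_mul_factorial (n : ℕ) :
    catalan n * (n ! * (n + 1)!) = (2 * n)! := by
  have hchoose := choose_mul_factorial_mul_factorial (by omega : n ≤ 2 * n)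
  rw [show 2 * n - n = n by omega, ← centralBinom_eq_two_mul_choose,
    ← succ_mul_catalan_eq_centralBinom] at hchoose
  rw [← hchoose, factorial_succ]
  ring

lemma catalan_ne_zero (n : ℕ) : catalan n ≠ 0 :=
  right_ne_zero_of_mul (succ_mul_catalan_eq_centralBinom n ▸ centralBinom_ne_zero n)

theorem padicValNat_two_catalan (n : ℕ) :
    padicValNat 2 (catalan n) + 1 = (digits 2 (n + 1)).sum := by
  have : Fact (Nat.Prime 2) := ⟨prime_two⟩
  have hval := congrArg (padicValNat 2) (catalan_mul_factorial_mul_factorial n)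
  rw [padicValNat.mul (catalan_ne_zero n) (by positivity),
    padicValNat.mul (factorial_ne_zero n) (factorial_ne_zero (n + 1))] at hval
  have h₁ := padicValNat_two_factorial_add_digits_sum n
  have h₂ := padicValNat_two_factorial_add_digits_sum (n + 1)
  have h₃ := padicValNat_two_factorial_add_digits_sum (2 * n)
  rw [digits_two_sum_two_mul] at h₃
  omega

lemma exists_eq_two_pow_of_digits_two_sum_eq_one {m : ℕ} (h : (digits 2 m).sum = 1) :
    ∃ c, m = 2 ^ c := by
  induction m using Nat.strong_induction_on with
  | _ m ih =>
    obtain ⟨k, rfl | rfl⟩ := m.even_or_odd'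
    · rw [digits_two_sum_two_mul] at h
      have hk : k ≠ 0 := by rintro rfl; simp at h
      obtain ⟨c, rfl⟩ := ih k (by omega) h
      exact ⟨c + 1, by ring⟩
    · rw [digits_two_sum_two_mul_add k one_lt_two] at h
      have hk : k = 0 := by by_contra hk; have := digits_sum_pos 2 hk; omega
      exact ⟨0, by simp [hk]⟩

lemma exists_eq_two_pow_add_two_pow_of_digits_two_sum_eq_two {m : ℕ}
    (h : (digits 2 m).sum = 2) : ∃ a b, a < b ∧ m = 2 ^ a + 2 ^ b := by
  induction m using Nat.strong_induction_on with
  | _ m ih =>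
    obtain ⟨k, rfl | rfl⟩ := m.even_or_odd'
    · rw [digits_two_sum_two_mul] at h
      have hk : k ≠ 0 := by rintro rfl; simp at h
      obtain ⟨a, b, hab, rfl⟩ := ih k (by omega) h
      exact ⟨a + 1, b + 1, by omega, by ring⟩
    · rw [digits_two_sum_two_mul_add k one_lt_two] at h
      have hk : (digits 2 k).sum = 1 := by omega
      obtain ⟨c, rfl⟩ := exists_eq_two_pow_of_digits_two_sum_eq_one hk
      exact ⟨0, c + 1, by omega, by ring⟩

end Nat

/-- If `C_n ≡ 2 (mod 4)` then `n = 2^a + 2^b - 1` for some `b > a ≥ 0`. -/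
theorem catalan_two_mod_four (n : ℕ) (h : catalan n % 4 = 2) :
    ∃ a b : ℕ, a < b ∧ n = 2 ^ a + 2 ^ b - 1 := by
  have : Fact (Nat.Prime 2) := ⟨prime_two⟩
  have hval : padicValNat 2 (catalan n) = 1 := by
    rw [show catalan n = 2 * (2 * (catalan n / 4) + 1) by omega,
      padicValNat.mul two_ne_zero (by omega), padicValNat.self one_lt_two,
      padicValNat.eq_zero_of_not_dvd (by omega)]
  have hsum : (digits 2 (n + 1)).sum = 2 := by rw [← padicValNat_two_catalan, hval]
  obtain ⟨a, b, hab, hn⟩ := exists_eq_two_pow_add_two_pow_of_digits_two_sum_eq_two hsum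
  exact ⟨a, b, hab, by omega⟩
end
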